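/- The Bochner integral T : L¹([0,1)^n; B) → B, T(f) = ∫_{[0,1)^n} f(y) dy, is a continuous ℝ-linear map satisfying: (i) T(f·b) = T(f)·b for all f ∈ L¹([0,1)^n; B) and b ∈ B, where (f·b)(x) = f(x)b; (ii) T(const 1_B) = 1_B, where const 1_B is the constant function with value the unit of B; and (iii) T(Γ((f_σ)_σ)) = 2^{-n} ∑_{σ∈{0,1}^n} T(f_σ) for every 2^n-tuple (f_σ)_σ. Moreover, T is the unique continuous ℝ-linear map L¹([0,1)^n; B) → B satisfying (i), (ii) and (iii). -/

import Mathlib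

open MeasureTheory

/-- Lebesgue measure restricted to the half-open unit cube `[0,1)^n`. -/
noncomputable def cubeMeasure (n : ℕ) : Measure (Fin n → ℝ) :=
  volume.restrict (Set.univ.pi fun _ => Set.Ico (0:ℝ) 1)

/-- The juxtaposition of a `2^n`-tuple of functions: on the subcube `C_σ` indexed by
`σ ∈ {0,1}^n` it takes the value `f_σ(2y − σ)`. -/
noncomputable def juxtFun {n : ℕ} {B : Type*} (F : (Fin n → Bool) → (Fin n → ℝ) → B)
    (y : Fin n → ℝ) : B :=
  F (fun j => if (1/2 : ℝ) ≤ y j then true else false)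
    (fun j => 2 * y j - (if (1/2 : ℝ) ≤ y j then 1 else 0))


open Filter Topology
open scoped ENNReal symmDiff

/-!
The Bochner integral is right `B`-linear, sends `1` to `1` because `[0,1)^n` has volume one, and
satisfies (iii) because `φ_σ : y ↦ 2y - σ` maps the subcube `C_σ` onto `[0,1)^n` and pushes
Lebesgue measure on `C_σ` forward to `2^{-n}` times Lebesgue measure on `[0,1)^n`.

For uniqueness let `D` be the difference of two such maps. By (i) and (ii) `D` kills constants.
Applied to a tuple with a single nonzero entry `1_A c`, (iii) gives
`D (1_{φ_σ⁻¹ A} c) = 2^{-n} D (1_A c)`. Every dyadic cube of level `k + 1`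
inside `[0,1)^n` is such a preimage of a dyadic cube of level `k`, so by induction on the level `D`
kills the indicators of all dyadic cubes. These form a π-system generating the Borel σ-algebra,
so Dynkin's π-λ theorem and the continuity of `D` extend this to all measurable sets, and density
of simple functions in `L¹` gives `D = 0`.
-/

namespace MeasureTheory

variable {α E F : Type*} {m : MeasurableSpace α} {μ : Measure α}
  [NormedAddCommGroup E] [NormedAddCommGroup F] {p : ℝ≥0∞}

theorem measurableSet_accumulate {f : ℕ → Set α} (hf : ∀ i, MeasurableSet (f i)) (N : ℕ) :
    MeasurableSet (Set.accumulate f N) := by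
  rw [Set.accumulate_def]
  exact .iUnion fun i ↦ .iUnion fun _ ↦ hf i

theorem indicatorConstLp_congr_ae {s t : Set α} (hs : MeasurableSet s) (ht : MeasurableSet t)
    (hμs : μ s ≠ ∞) (hμt : μ t ≠ ∞) (hst : s =ᵐ[μ] t) (c : E) :
    indicatorConstLp p hs hμs c = indicatorConstLp p ht hμt c :=
  Lp.ext (indicatorConstLp_coeFn.trans
    ((indicator_ae_eq_of_ae_eq_set hst).trans indicatorConstLp_coeFn.symm))

variable [IsFiniteMeasure μ]

theorem indicatorConstLp_compl {s : Set α} (hs : MeasurableSet s) (c : E) :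
    indicatorConstLp p hs.compl (measure_ne_top μ sᶜ) c
      = Lp.const p μ c - indicatorConstLp p hs (measure_ne_top μ s) c := by
  have h := indicatorConstLp_disjoint_union (p := p) hs hs.compl (measure_ne_top μ s)
    (measure_ne_top μ sᶜ) disjoint_compl_right c
  simp only [Set.union_compl_self, indicatorConstLp_univ] at h
  rw [h, add_sub_cancel_left]

theorem Lp.apply_const_eq_of_map_mul_const [NormedRing B] {S : Lp B 1 μ → B}
    (hmul : ∀ (f g : Lp B 1 μ) (b : B), ⇑g =ᵐ[μ] (fun x ↦ f x * b) → S g = S f * b)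
    (hone : ∀ one : Lp B 1 μ, ⇑one =ᵐ[μ] (fun _ ↦ (1 : B)) → S one = 1) (c : B) :
    S (Lp.const 1 μ c) = c := by
  have h1 := Lp.coeFn_const 1 μ (1 : B)
  rw [hmul (Lp.const 1 μ 1) _ c, hone _ h1, one_mul]
  filter_upwards [h1, Lp.coeFn_const 1 μ c] with x hx hxc
  rw [hxc, hx, Function.const_apply, Function.const_apply, one_mul]

variable [Fact (1 ≤ p)]

theorem tendsto_indicatorConstLp_accumulate (hp : p ≠ ∞) {f : ℕ → Set α}
    (hf : ∀ i, MeasurableSet (f i)) (c : E) :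
    Tendsto (fun N ↦ indicatorConstLp p (measurableSet_accumulate hf N) (measure_ne_top μ _) c)
      atTop (𝓝 (indicatorConstLp p (MeasurableSet.iUnion hf) (measure_ne_top μ _) c)) := by
  refine tendsto_indicatorConstLp_set hp ?_
  have hdiff (N : ℕ) :
      μ (Set.accumulate f N ∆ ⋃ i, f i) = μ (⋃ i, f i) - μ (Set.accumulate f N) := by
    rw [symmDiff_of_le (Set.accumulate_subset_iUnion N),
      measure_sdiff (Set.accumulate_subset_iUnion N)
        (measurableSet_accumulate hf N).nullMeasurableSet (measure_ne_top μ _)]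
  simp only [hdiff]
  simpa using ENNReal.Tendsto.sub (tendsto_const_nhds (x := μ (⋃ i, f i)))
    (tendsto_measure_iUnion_accumulate (μ := μ) (f := f)) (Or.inl (measure_ne_top μ _))

variable [NormedSpace ℝ E] [NormedSpace ℝ F] {D : Lp E p μ →L[ℝ] F}

theorem Lp.continuousLinearMap_eq_zero_of_indicatorConstLp (hp : p ≠ ∞)
    (hD : ∀ s (hs : MeasurableSet s) (c : E),
      D (indicatorConstLp p hs (measure_ne_top μ s) c) = 0) :
    D = 0 := by
  ext f
  rw [zero_apply]
  induction f using Lp.induction hp with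
  | indicatorConst c hs hμs => exact hD _ hs c
  | add _ _ _ hf hg => rw [map_add, hf, hg, add_zero]
  | isClosed => exact isClosed_eq D.continuous continuous_const

theorem Lp.map_indicatorConstLp_eq_zero_of_isPiSystem (hp : p ≠ ∞) {S : Set (Set α)}
    (hgen : m = MeasurableSpace.generateFrom S) (hS : IsPiSystem S)
    (hconst : ∀ c, D (Lp.const p μ c) = 0)
    (hD : ∀ s ∈ S, ∀ (hs : MeasurableSet s) (c : E),
      D (indicatorConstLp p hs (measure_ne_top μ s) c) = 0)
    (s : Set α) (hs : MeasurableSet s) (c : E) :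
    D (indicatorConstLp p hs (measure_ne_top μ s) c) = 0 := by
  induction s, hs using MeasurableSpace.induction_on_inter hgen hS generalizing c with
  | empty => simp
  | basic t ht => exact hD t ht _ c
  | compl t ht iht => rw [indicatorConstLp_compl ht, map_sub, hconst, iht, sub_zero]
  | iUnion f hdisj hf ihf =>
    have hacc (N : ℕ) :
        D (indicatorConstLp p (measurableSet_accumulate hf N) (measure_ne_top μ _) c) = 0 := by
      induction N with
      | zero => simpa [Set.accumulate_zero_nat] using ihf 0 c
      | succ N ih =>
        simp only [Set.accumulate_succ]
        rw [indicatorConstLp_disjoint_union (measurableSet_accumulate hf N) (hf (N + 1))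
          (measure_ne_top μ _) (measure_ne_top μ _) (Set.disjoint_accumulate hdisj N.lt_succ_self),
          map_add, ih, ihf, add_zero]
    refine tendsto_nhds_unique
      ((D.continuous.tendsto _).comp (tendsto_indicatorConstLp_accumulate hp hf c)) ?_
    simpa only [Function.comp_def, hacc] using tendsto_const_nhds

end MeasureTheory

section DyadicCube

variable {ι : Type*}

/-- The half-open cube `∏ i, [a i / 2^k, (a i + 1) / 2^k)`, written with floors so that the
nesting of dyadic cubes becomes integer division. -/
def dyadicCube (k : ℕ) (a : ι → ℤ) : Set (ι → ℝ) := {x | ∀ i, ⌊(2 : ℝ) ^ k * x i⌋ = a i}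

def dyadicCubes (ι : Type*) : Set (Set (ι → ℝ)) :=
  Set.range fun ka : ℕ × (ι → ℤ) ↦ dyadicCube ka.1 ka.2

theorem self_mem_dyadicCube (k : ℕ) (x : ι → ℝ) :
    x ∈ dyadicCube k (fun i ↦ ⌊(2 : ℝ) ^ k * x i⌋) := fun _ ↦ rfl

theorem measurableSet_dyadicCube [Countable ι] (k : ℕ) (a : ι → ℤ) :
    MeasurableSet (dyadicCube k a) := by
  simp only [dyadicCube, Set.ofPred_forall]
  exact .iInter fun i ↦ measurableSet_eq_fun (by fun_prop) measurable_const

theorem floor_two_pow_mul_eq_floor_div {k l : ℕ} (hkl : k ≤ l) (t : ℝ) :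
    ⌊(2 : ℝ) ^ k * t⌋ = ⌊(2 : ℝ) ^ l * t⌋ / (2 ^ (l - k) : ℕ) := by
  rw [← Int.floor_div_natCast]
  congr 1
  rw [Nat.cast_pow, Nat.cast_ofNat, ← pow_sub_mul_pow 2 hkl]
  field_simp

theorem dyadicCube_subset_of_le {k l : ℕ} {a b : ι → ℤ} {x : ι → ℝ} (hkl : k ≤ l)
    (hxa : x ∈ dyadicCube k a) (hxb : x ∈ dyadicCube l b) :
    dyadicCube l b ⊆ dyadicCube k a := fun y hy i ↦ by
  rw [floor_two_pow_mul_eq_floor_div hkl, hy i, ← hxb i, ← floor_two_pow_mul_eq_floor_div hkl,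
    hxa i]

theorem isPiSystem_dyadicCubes : IsPiSystem (dyadicCubes ι) := by
  rintro _ ⟨⟨k, a⟩, rfl⟩ _ ⟨⟨l, b⟩, rfl⟩ ⟨x, hxa, hxb⟩
  rcases le_total k l with hkl | hlk
  · rw [Set.inter_eq_right.2 (dyadicCube_subset_of_le hkl hxa hxb)]
    exact ⟨(l, b), rfl⟩
  · rw [Set.inter_eq_left.2 (dyadicCube_subset_of_le hlk hxb hxa)]
    exact ⟨(k, a), rfl⟩

theorem dist_lt_of_mem_dyadicCube [Fintype ι] {k : ℕ} {a : ι → ℤ} {x y : ι → ℝ}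
    (hx : x ∈ dyadicCube k a) (hy : y ∈ dyadicCube k a) : dist x y < 2⁻¹ ^ k := by
  have h2k : (0 : ℝ) < 2 ^ k := by positivity
  refine (dist_pi_lt_iff (by positivity)).2 fun i ↦ ?_
  have h := Int.abs_sub_lt_one_of_floor_eq_floor ((hx i).trans (hy i).symm)
  rw [← mul_sub, abs_mul, abs_of_pos h2k, ← lt_div_iff₀' h2k] at h
  rwa [Real.dist_eq, inv_pow, ← one_div]

theorem sUnion_dyadicCubes_subset_of_isOpen [Fintype ι] {U : Set (ι → ℝ)} (hU : IsOpen U) :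
    ⋃₀ {Q ∈ dyadicCubes ι | Q ⊆ U} = U := by
  refine subset_antisymm (Set.sUnion_subset fun Q hQ ↦ hQ.2) fun x hx ↦ ?_
  obtain ⟨ε, hε, hball⟩ := Metric.isOpen_iff.1 hU x hx
  obtain ⟨k, hk⟩ := exists_pow_lt_of_lt_one hε (by norm_num : (2 : ℝ)⁻¹ < 1)
  refine ⟨_, ⟨⟨(k, _), rfl⟩, fun y hy ↦ hball ?_⟩, self_mem_dyadicCube k x⟩
  exact (dist_lt_of_mem_dyadicCube hy (self_mem_dyadicCube k x)).trans hk

theorem generateFrom_dyadicCubes [Fintype ι] :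
    MeasurableSpace.generateFrom (dyadicCubes ι) = (inferInstance : MeasurableSpace (ι → ℝ)) := by
  refine le_antisymm (MeasurableSpace.generateFrom_le ?_) ?_
  · rintro _ ⟨⟨k, a⟩, rfl⟩
    exact measurableSet_dyadicCube k a
  · rw [BorelSpace.measurable_eq (α := ι → ℝ)]
    refine MeasurableSpace.generateFrom_le fun U hU ↦ ?_
    rw [← sUnion_dyadicCubes_subset_of_isOpen hU]
    exact .sUnion ((Set.countable_range _).mono fun Q hQ ↦ hQ.1)
      fun Q hQ ↦ MeasurableSpace.measurableSet_generateFrom hQ.1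

end DyadicCube

section UnitCube

variable {n : ℕ}

def unitCube (n : ℕ) : Set (Fin n → ℝ) := Set.univ.pi fun _ ↦ Set.Ico (0 : ℝ) 1

theorem cubeMeasure_eq : cubeMeasure n = volume.restrict (unitCube n) := rfl

theorem measurableSet_unitCube : MeasurableSet (unitCube n) :=
  .univ_pi fun _ ↦ measurableSet_Ico

theorem mem_unitCube {x : Fin n → ℝ} : x ∈ unitCube n ↔ ∀ j, 0 ≤ x j ∧ x j < 1 := by
  simp [unitCube]

instance isProbabilityMeasure_cubeMeasure : IsProbabilityMeasure (cubeMeasure n) :=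
  ⟨by simp [cubeMeasure_eq, unitCube, volume_pi_pi]⟩

theorem indicatorConstLp_unitCube {E : Type*} [NormedAddCommGroup E] {p : ℝ≥0∞} (c : E) :
    indicatorConstLp p measurableSet_unitCube (measure_ne_top (cubeMeasure n) _) c
      = Lp.const p (cubeMeasure n) c := by
  rw [← indicatorConstLp_univ]
  exact indicatorConstLp_congr_ae _ _ _ _
    (eventuallyEq_univ.2 (ae_restrict_mem measurableSet_unitCube)) c

/-- `piece σ` is the subcube `C_σ`, and `pieceMap σ` is the map `y ↦ 2y - σ` taking it onto
`[0,1)^n`. -/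
def pieceMap (σ : Fin n → Bool) (y : Fin n → ℝ) : Fin n → ℝ := fun j ↦ 2 * y j - (σ j).toNat

def piece (σ : Fin n → Bool) : Set (Fin n → ℝ) := pieceMap σ ⁻¹' unitCube n

theorem measurable_pieceMap (σ : Fin n → Bool) : Measurable (pieceMap σ) := by
  unfold pieceMap
  fun_prop

theorem measurableSet_piece (σ : Fin n → Bool) : MeasurableSet (piece σ) :=
  measurableSet_unitCube.preimage (measurable_pieceMap σ)

theorem juxtFun_eq {B : Type*} (F : (Fin n → Bool) → (Fin n → ℝ) → B) (y : Fin n → ℝ) :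
    juxtFun F y = F (fun j ↦ decide (1 / 2 ≤ y j)) (pieceMap (fun j ↦ decide (1 / 2 ≤ y j)) y) := by
  have hφ : (fun j ↦ 2 * y j - if (1 / 2 : ℝ) ≤ y j then 1 else 0)
      = pieceMap (fun j ↦ decide (1 / 2 ≤ y j)) y := by
    funext j
    by_cases hj : (1 / 2 : ℝ) ≤ y j <;> simp only [pieceMap, hj, ↓reduceIte, decide_true,
      decide_false, Bool.toNat_true, Bool.toNat_false, Nat.cast_one, Nat.cast_zero]
  simp only [juxtFun, hφ, Bool.if_false_right, Bool.and_true]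

theorem decide_le_eq_of_mem_piece {σ : Fin n → Bool} {y : Fin n → ℝ} (hy : y ∈ piece σ) :
    (fun j ↦ decide (1 / 2 ≤ y j)) = σ :=
  funext fun j ↦ by
    have := mem_unitCube.1 hy j
    cases hσ : σ j <;> simp [pieceMap, hσ] at this ⊢ <;> linarith

theorem juxtFun_apply_of_mem_piece {B : Type*} (F : (Fin n → Bool) → (Fin n → ℝ) → B)
    {σ : Fin n → Bool} {y : Fin n → ℝ} (hy : y ∈ piece σ) :
    juxtFun F y = F σ (pieceMap σ y) := by
  rw [juxtFun_eq, decide_le_eq_of_mem_piece hy]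

theorem mem_piece_of_mem_unitCube {y : Fin n → ℝ} (hy : y ∈ unitCube n) :
    y ∈ piece (fun j ↦ decide (1 / 2 ≤ y j)) := by
  refine mem_unitCube.2 fun j ↦ ?_
  have := mem_unitCube.1 hy j
  by_cases hj : (2⁻¹ : ℝ) ≤ y j <;> simp [pieceMap, hj] <;> constructor <;> linarith

theorem unitCube_eq_iUnion_piece : unitCube n = ⋃ σ, piece σ := by
  refine subset_antisymm (fun y hy ↦ Set.mem_iUnion.2 ⟨_, mem_piece_of_mem_unitCube hy⟩) ?_
  refine Set.iUnion_subset fun σ y hy ↦ mem_unitCube.2 fun j ↦ ?_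
  have := mem_unitCube.1 hy j
  cases hσ : σ j <;> simp [pieceMap, hσ] at this <;> constructor <;> linarith

theorem pairwise_disjoint_piece : Pairwise (Function.onFun Disjoint (piece (n := n))) :=
  fun _ _ hστ ↦ Set.disjoint_left.2 fun _ hσ hτ ↦
    hστ ((decide_le_eq_of_mem_piece hσ).symm.trans (decide_le_eq_of_mem_piece hτ))

theorem map_pieceMap_volume (σ : Fin n → Bool) :
    Measure.map (pieceMap σ) volume = ENNReal.ofReal ((2 ^ n)⁻¹) • volume := by
  have hφ : pieceMap σ = (fun z ↦ z - fun j ↦ ((σ j).toNat : ℝ)) ∘ ((2 : ℝ) • ·) := by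
    funext y j
    simp [pieceMap]
  rw [hφ, ← Measure.map_map (by fun_prop) (by fun_prop),
    Measure.map_addHaar_smul volume two_ne_zero, Measure.map_smul,
    (measurePreserving_sub_right volume _).map_eq, Module.finrank_fin_fun,
    abs_of_pos (by positivity)]

theorem map_pieceMap_restrict_piece (σ : Fin n → Bool) :
    Measure.map (pieceMap σ) (volume.restrict (piece σ))
      = ENNReal.ofReal ((2 ^ n)⁻¹) • cubeMeasure n := by
  rw [piece, ← Measure.restrict_map (measurable_pieceMap σ) measurableSet_unitCube,
    map_pieceMap_volume, Measure.restrict_smul, cubeMeasure_eq]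

theorem ae_eq_comp_pieceMap {B : Type*} {f g : (Fin n → ℝ) → B} (σ : Fin n → Bool)
    (hfg : f =ᵐ[cubeMeasure n] g) :
    f ∘ pieceMap σ =ᵐ[volume.restrict (piece σ)] g ∘ pieceMap σ := by
  refine ae_eq_comp (measurable_pieceMap σ).aemeasurable ?_
  rw [map_pieceMap_restrict_piece]
  exact Measure.ae_smul_measure hfg _

theorem juxtFun_ae_eq {B : Type*} {F G : (Fin n → Bool) → (Fin n → ℝ) → B}
    (hFG : ∀ σ, F σ =ᵐ[cubeMeasure n] G σ) :
    juxtFun F =ᵐ[cubeMeasure n] juxtFun G := by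
  rw [Filter.EventuallyEq, cubeMeasure_eq, unitCube_eq_iUnion_piece, ae_restrict_iUnion_iff]
  intro σ
  filter_upwards [ae_restrict_mem (measurableSet_piece σ), ae_eq_comp_pieceMap σ (hFG σ)]
    with y hy hFGy
  rw [juxtFun_apply_of_mem_piece F hy, juxtFun_apply_of_mem_piece G hy]
  exact hFGy

section Integral

variable {E : Type*} [NormedAddCommGroup E] [NormedSpace ℝ E]

theorem setIntegral_piece_comp_pieceMap (σ : Fin n → Bool) {g : (Fin n → ℝ) → E}
    (hg : AEStronglyMeasurable g (cubeMeasure n)) :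
    ∫ y in piece σ, g (pieceMap σ y) = ((2 : ℝ) ^ n)⁻¹ • ∫ y, g y ∂cubeMeasure n := by
  rw [← integral_map (measurable_pieceMap σ).aemeasurable
      (by rw [map_pieceMap_restrict_piece]; exact hg.smul_measure _),
    map_pieceMap_restrict_piece, integral_smul_measure, ENNReal.toReal_ofReal (by positivity)]

theorem integral_juxtFun {F : (Fin n → Bool) → (Fin n → ℝ) → E}
    (hF : ∀ σ, AEStronglyMeasurable (F σ) (cubeMeasure n))
    (hint : Integrable (juxtFun F) (cubeMeasure n)) :
    ∫ y, juxtFun F y ∂cubeMeasure n = ((2 : ℝ) ^ n)⁻¹ • ∑ σ, ∫ y, F σ y ∂cubeMeasure n :=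
  calc ∫ y, juxtFun F y ∂cubeMeasure n = ∑ σ, ∫ y in piece σ, juxtFun F y := by
        rw [cubeMeasure_eq, unitCube_eq_iUnion_piece] at hint ⊢
        exact integral_iUnion_fintype measurableSet_piece pairwise_disjoint_piece
          fun σ ↦ IntegrableOn.mono_set hint (Set.subset_iUnion _ σ)
    _ = ∑ σ, ∫ y in piece σ, F σ (pieceMap σ y) :=
        Finset.sum_congr rfl fun σ _ ↦ setIntegral_congr_fun (measurableSet_piece σ)
          fun y hy ↦ juxtFun_apply_of_mem_piece F hy
    _ = ((2 : ℝ) ^ n)⁻¹ • ∑ σ, ∫ y, F σ y ∂cubeMeasure n := by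
        rw [Finset.smul_sum]
        exact Finset.sum_congr rfl fun σ _ ↦ setIntegral_piece_comp_pieceMap σ (hF σ)

end Integral

theorem juxtFun_single_indicator {B : Type*} [Zero B] (τ : Fin n → Bool) {A : Set (Fin n → ℝ)}
    (hA : A ⊆ unitCube n) (c : B) :
    juxtFun (Pi.single τ (A.indicator fun _ ↦ c)) = (pieceMap τ ⁻¹' A).indicator fun _ ↦ c := by
  funext y
  rw [juxtFun_eq]
  by_cases hτ : (fun j ↦ decide (1 / 2 ≤ y j)) = τ
  · rw [hτ, Pi.single_eq_same]
    rfl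
  · have hy : y ∉ pieceMap τ ⁻¹' A := fun hy ↦ hτ (decide_le_eq_of_mem_piece (hA hy))
    rw [Pi.single_eq_of_ne hτ, Set.indicator_of_notMem hy, Pi.zero_apply]

theorem dyadicCube_zero_zero : dyadicCube 0 (0 : Fin n → ℤ) = unitCube n := by
  ext x
  simp [dyadicCube, mem_unitCube, Int.floor_eq_zero_iff]

theorem mem_dyadicCube_corner (k : ℕ) (a : Fin n → ℤ) :
    (fun j ↦ (a j : ℝ) / 2 ^ k) ∈ dyadicCube k a := fun j ↦ by
  rw [mul_div_cancel₀ _ (by positivity), Int.floor_intCast]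

theorem dyadicCube_subset_unitCube_iff {k : ℕ} {a : Fin n → ℤ} :
    dyadicCube k a ⊆ unitCube n ↔ ∀ j, 0 ≤ a j ∧ a j < 2 ^ k := by
  have h2k : (0 : ℝ) < 2 ^ k := by positivity
  have hcorner : (fun j ↦ (a j : ℝ) / 2 ^ k) ∈ unitCube n ↔ ∀ j, 0 ≤ a j ∧ a j < 2 ^ k := by
    simp only [mem_unitCube, le_div_iff₀ h2k, div_lt_one h2k, zero_mul]
    norm_cast
  refine ⟨fun h ↦ hcorner.1 (h (mem_dyadicCube_corner k a)), fun h ↦ ?_⟩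
  rw [← dyadicCube_zero_zero] at hcorner ⊢
  exact dyadicCube_subset_of_le (Nat.zero_le k) (hcorner.2 h) (mem_dyadicCube_corner k a)

theorem dyadicCube_subset_unitCube_or_disjoint (k : ℕ) (a : Fin n → ℤ) :
    dyadicCube k a ⊆ unitCube n ∨ Disjoint (dyadicCube k a) (unitCube n) := by
  refine or_iff_not_imp_right.2 fun h ↦ ?_
  obtain ⟨x, hxa, hx⟩ := Set.not_disjoint_iff.1 h
  rw [← dyadicCube_zero_zero] at hx ⊢
  exact dyadicCube_subset_of_le (Nat.zero_le k) hx hxa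

theorem preimage_pieceMap_dyadicCube (τ : Fin n → Bool) (k : ℕ) (a : Fin n → ℤ) :
    pieceMap τ ⁻¹' dyadicCube k a
      = dyadicCube (k + 1) (fun j ↦ a j + 2 ^ k * (τ j).toNat) := by
  ext y
  refine forall_congr' fun j ↦ ?_
  have h : (2 : ℝ) ^ k * pieceMap τ y j
      = 2 ^ (k + 1) * y j - ((2 ^ k * (τ j).toNat : ℤ) : ℝ) := by
    push_cast [pieceMap]
    ring
  rw [h, Int.floor_sub_intCast, sub_eq_iff_eq_add]

theorem exists_dyadicCube_eq_preimage_pieceMap {k : ℕ} {a : Fin n → ℤ}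
    (ha : ∀ j, 0 ≤ a j ∧ a j < 2 ^ (k + 1)) :
    ∃ τ a', (∀ j, 0 ≤ a' j ∧ a' j < 2 ^ k) ∧
      dyadicCube (k + 1) a = pieceMap τ ⁻¹' dyadicCube k a' := by
  refine ⟨fun j ↦ decide (2 ^ k ≤ a j), fun j ↦ a j - 2 ^ k * (decide (2 ^ k ≤ a j)).toNat,
    fun j ↦ ?_, by simp only [preimage_pieceMap_dyadicCube, sub_add_cancel]⟩
  have := ha j
  rw [pow_succ] at this
  by_cases hj : 2 ^ k ≤ a j <;> simp [hj] <;> omega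

section Uniqueness

variable {E F : Type*} [NormedAddCommGroup E] [NormedSpace ℝ E]
  [NormedAddCommGroup F] [NormedSpace ℝ F]

/-- Property (iii) of the statement. -/
def JuxtAveraging (S : Lp E 1 (cubeMeasure n) → F) : Prop :=
  ∀ (G : (Fin n → Bool) → Lp E 1 (cubeMeasure n)) (h : Lp E 1 (cubeMeasure n)),
    ⇑h =ᵐ[cubeMeasure n] juxtFun (fun σ ↦ ⇑(G σ)) → S h = ((2 : ℝ) ^ n)⁻¹ • ∑ σ, S (G σ)

theorem juxtAveraging_integral :
    JuxtAveraging (fun f : Lp E 1 (cubeMeasure n) ↦ ∫ x, f x ∂cubeMeasure n) := fun G h hh ↦ by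
  dsimp only
  rw [integral_congr_ae hh]
  exact integral_juxtFun (fun σ ↦ Lp.aestronglyMeasurable (G σ)) ((L1.integrable_coeFn h).congr hh)

theorem JuxtAveraging.sub {S T : Lp E 1 (cubeMeasure n) →L[ℝ] F} (hS : JuxtAveraging ⇑S)
    (hT : JuxtAveraging ⇑T) : JuxtAveraging ⇑(S - T) := fun G h hh ↦ by
  simp only [sub_apply, hS G h hh, hT G h hh, Finset.sum_sub_distrib, smul_sub]

variable {D : Lp E 1 (cubeMeasure n) →L[ℝ] F}

theorem JuxtAveraging.apply_indicatorConstLp_preimage_pieceMap (hD : JuxtAveraging ⇑D)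
    (τ : Fin n → Bool) {A : Set (Fin n → ℝ)} (hA : MeasurableSet A) (hAsub : A ⊆ unitCube n)
    (c : E) :
    D (indicatorConstLp 1 (hA.preimage (measurable_pieceMap τ)) (measure_ne_top _ _) c)
      = ((2 : ℝ) ^ n)⁻¹ • D (indicatorConstLp 1 hA (measure_ne_top _ _) c) := by
  set f : Lp E 1 (cubeMeasure n) := indicatorConstLp 1 hA (measure_ne_top _ _) c
  have hsingle (σ : Fin n → Bool) : ⇑((Pi.single τ f : _ → Lp E 1 (cubeMeasure n)) σ)
      =ᵐ[cubeMeasure n] (Pi.single τ (A.indicator fun _ ↦ c) : _ → (Fin n → ℝ) → E) σ := by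
    rcases eq_or_ne σ τ with rfl | hστ
    · simpa only [Pi.single_eq_same] using indicatorConstLp_coeFn
    · simpa only [Pi.single_eq_of_ne hστ] using Lp.coeFn_zero E 1 (cubeMeasure n)
  rw [hD (Pi.single τ f) _ (indicatorConstLp_coeFn.trans ?_), ← map_sum, Fintype.sum_pi_single']
  rw [← juxtFun_single_indicator τ hAsub]
  exact (juxtFun_ae_eq hsingle).symm

theorem JuxtAveraging.apply_indicatorConstLp_dyadicCube_of_subset (hD : JuxtAveraging ⇑D)
    (hconst : ∀ c, D (Lp.const 1 (cubeMeasure n) c) = 0) {k : ℕ} {a : Fin n → ℤ}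
    (ha : dyadicCube k a ⊆ unitCube n) (c : E) :
    D (indicatorConstLp 1 (measurableSet_dyadicCube k a) (measure_ne_top _ _) c) = 0 := by
  induction k generalizing a with
  | zero =>
    obtain rfl : a = 0 := funext fun j ↦ by
      have := dyadicCube_subset_unitCube_iff.1 ha j
      simp only [pow_zero, Pi.zero_apply] at this ⊢
      omega
    simp only [dyadicCube_zero_zero, indicatorConstLp_unitCube, hconst]
  | succ k ih =>
    obtain ⟨τ, a', ha', hQ⟩ :=
      exists_dyadicCube_eq_preimage_pieceMap (dyadicCube_subset_unitCube_iff.1 ha)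
    have hsub := dyadicCube_subset_unitCube_iff.2 ha'
    simp only [hQ]
    rw [hD.apply_indicatorConstLp_preimage_pieceMap τ (measurableSet_dyadicCube k a') hsub,
      ih hsub, smul_zero]

theorem JuxtAveraging.apply_indicatorConstLp_dyadicCube (hD : JuxtAveraging ⇑D)
    (hconst : ∀ c, D (Lp.const 1 (cubeMeasure n) c) = 0) (k : ℕ) (a : Fin n → ℤ) (c : E) :
    D (indicatorConstLp 1 (measurableSet_dyadicCube k a) (measure_ne_top _ _) c) = 0 := by
  rcases dyadicCube_subset_unitCube_or_disjoint k a with hsub | hdisj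
  · exact hD.apply_indicatorConstLp_dyadicCube_of_subset hconst hsub c
  · have hnull : cubeMeasure n (dyadicCube k a) = 0 := by
      rw [cubeMeasure_eq, Measure.restrict_apply (measurableSet_dyadicCube k a), hdisj.inter_eq,
        measure_empty]
    rw [indicatorConstLp_congr_ae _ .empty _ (by simp) (ae_eq_empty.2 hnull),
      indicatorConstLp_empty, map_zero]

theorem JuxtAveraging.eq_zero (hD : JuxtAveraging ⇑D)
    (hconst : ∀ c, D (Lp.const 1 (cubeMeasure n) c) = 0) : D = 0 := by
  refine Lp.continuousLinearMap_eq_zero_of_indicatorConstLp ENNReal.one_ne_top fun s hs c ↦ ?_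
  refine Lp.map_indicatorConstLp_eq_zero_of_isPiSystem ENNReal.one_ne_top
    generateFrom_dyadicCubes.symm isPiSystem_dyadicCubes hconst ?_ s hs c
  rintro _ ⟨⟨k, a⟩, rfl⟩ _ c
  exact hD.apply_indicatorConstLp_dyadicCube hconst k a c

end Uniqueness

end UnitCube

theorem bochner_integral_unique_morphism_general
    (n : ℕ)
    (B : Type*) [NormedRing B] [NormedAlgebra ℝ B] [CompleteSpace B] :
    ∃ T : Lp B 1 (cubeMeasure n) →L[ℝ] B,
      (∀ f : Lp B 1 (cubeMeasure n), T f = ∫ x, f x ∂(cubeMeasure n)) ∧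
      -- (i) right B-linearity
      (∀ (f g : Lp B 1 (cubeMeasure n)) (b : B),
        ⇑g =ᵐ[cubeMeasure n] (fun x => f x * b) → T g = T f * b) ∧
      -- (ii) normalization
      (∀ one : Lp B 1 (cubeMeasure n),
        ⇑one =ᵐ[cubeMeasure n] (fun _ => (1 : B)) → T one = 1) ∧
      -- (iii) juxtaposition goes to the average
      (∀ (F : (Fin n → Bool) → Lp B 1 (cubeMeasure n)) (h : Lp B 1 (cubeMeasure n)),
        ⇑h =ᵐ[cubeMeasure n] juxtFun (fun σ => ⇑(F σ)) →
          T h = ((2 : ℝ) ^ n)⁻¹ • ∑ σ : Fin n → Bool, T (F σ)) ∧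
      -- uniqueness: any continuous ℝ-linear map satisfying (i), (ii), (iii) equals T
      (∀ S : Lp B 1 (cubeMeasure n) →L[ℝ] B,
        ((∀ (f g : Lp B 1 (cubeMeasure n)) (b : B),
            ⇑g =ᵐ[cubeMeasure n] (fun x => f x * b) → S g = S f * b) ∧
          (∀ one : Lp B 1 (cubeMeasure n),
            ⇑one =ᵐ[cubeMeasure n] (fun _ => (1 : B)) → S one = 1) ∧
          (∀ (F : (Fin n → Bool) → Lp B 1 (cubeMeasure n)) (h : Lp B 1 (cubeMeasure n)),
            ⇑h =ᵐ[cubeMeasure n] juxtFun (fun σ => ⇑(F σ)) →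
              S h = ((2 : ℝ) ^ n)⁻¹ • ∑ σ : Fin n → Bool, S (F σ))) →
          S = T) := by
  set T : Lp B 1 (cubeMeasure n) →L[ℝ] B := L1.integralCLM
  have hT (f : Lp B 1 (cubeMeasure n)) : T f = ∫ x, f x ∂cubeMeasure n :=
    (L1.integral_eq f).symm.trans (L1.integral_eq_integral f)
  have hT1 (f g : Lp B 1 (cubeMeasure n)) (b : B) (hg : ⇑g =ᵐ[cubeMeasure n] fun x ↦ f x * b) :
      T g = T f * b := by
    rw [hT, hT, integral_congr_ae hg, integral_mul_const_of_integrable (L1.integrable_coeFn f)]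
  have hT2 (one : Lp B 1 (cubeMeasure n)) (h : ⇑one =ᵐ[cubeMeasure n] fun _ ↦ (1 : B)) :
      T one = 1 := by
    rw [hT, integral_congr_ae h, integral_const, probReal_univ, one_smul]
  have hT3 : JuxtAveraging ⇑T := by
    simpa only [← hT] using juxtAveraging_integral (E := B) (n := n)
  refine ⟨T, hT, hT1, hT2, hT3, fun S ⟨hS1, hS2, hS3⟩ ↦ sub_eq_zero.1 ?_⟩
  refine (JuxtAveraging.sub hS3 hT3).eq_zero fun c ↦ ?_
  rw [sub_apply, Lp.apply_const_eq_of_map_mul_const hS1 hS2,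
    Lp.apply_const_eq_of_map_mul_const hT1 hT2, sub_self]

/-- the Bochner integral `T(f) = ∫ f` is a continuous ℝ-linear map
`L¹([0,1)^n; B) → B` which is right `B`-linear, sends the constant function `1_B` to
`1_B`, intertwines the juxtaposition with the average `2^{-n} ∑`, and is the unique
continuous ℝ-linear map with these three properties. -/
theorem bochner_integral_unique_morphism
    (n : ℕ) (hn : 1 ≤ n)
    (B : Type*) [NormedRing B] [NormedAlgebra ℝ B] [CompleteSpace B] :
    ∃ T : Lp B 1 (cubeMeasure n) →L[ℝ] B,
      (∀ f : Lp B 1 (cubeMeasure n), T f = ∫ x, f x ∂(cubeMeasure n)) ∧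
      -- (i) right B-linearity
      (∀ (f g : Lp B 1 (cubeMeasure n)) (b : B),
        ⇑g =ᵐ[cubeMeasure n] (fun x => f x * b) → T g = T f * b) ∧
      -- (ii) normalization
      (∀ one : Lp B 1 (cubeMeasure n),
        ⇑one =ᵐ[cubeMeasure n] (fun _ => (1 : B)) → T one = 1) ∧
      -- (iii) juxtaposition goes to the average
      (∀ (F : (Fin n → Bool) → Lp B 1 (cubeMeasure n)) (h : Lp B 1 (cubeMeasure n)),
        ⇑h =ᵐ[cubeMeasure n] juxtFun (fun σ => ⇑(F σ)) →
          T h = ((2 : ℝ) ^ n)⁻¹ • ∑ σ : Fin n → Bool, T (F σ)) ∧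
      -- uniqueness: any continuous ℝ-linear map satisfying (i), (ii), (iii) equals T
      (∀ S : Lp B 1 (cubeMeasure n) →L[ℝ] B,
        ((∀ (f g : Lp B 1 (cubeMeasure n)) (b : B),
            ⇑g =ᵐ[cubeMeasure n] (fun x => f x * b) → S g = S f * b) ∧
          (∀ one : Lp B 1 (cubeMeasure n),
            ⇑one =ᵐ[cubeMeasure n] (fun _ => (1 : B)) → S one = 1) ∧
          (∀ (F : (Fin n → Bool) → Lp B 1 (cubeMeasure n)) (h : Lp B 1 (cubeMeasure n)),
            ⇑h =ᵐ[cubeMeasure n] juxtFun (fun σ => ⇑(F σ)) →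
              S h = ((2 : ℝ) ^ n)⁻¹ • ∑ σ : Fin n → Bool, S (F σ))) →
          S = T) :=
  bochner_integral_unique_morphism_general n B
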